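/- Let a, b, t be integers with 2 ≤ a < t < b, and assume that either b ≥ a + t, or that b < a + t and all three of the following hold: b > 2a, t ≤ 2a, and a + b ≥ 2t - 1. Then there exists n₀ such that for all n ≥ n₀, ex(n, K_{a,b}, K_{a+1,t}) = N(K_{a,b}, K_{a,n-a}). -/

import Mathlib

open SimpleGraph

/-- `F` is contained in `G` as a subgraph, i.e. there is an injective graph
homomorphism from `F` to `G`. -/
def ContainsCopy {α β : Type*} (F : SimpleGraph α) (G : SimpleGraph β) : Prop :=
  ∃ f : F →g G, Function.Injective f

/-- `N(H,G)`: the number of subgraphs of `G` isomorphic to `H`. -/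
noncomputable def copyCount {α β : Type*} (H : SimpleGraph α) (G : SimpleGraph β) : ℕ :=
  Nat.card {G' : G.Subgraph // Nonempty (H ≃g G'.coe)}

/-- `ex(n,H,F)`: the maximum number of copies of `H` in an `F`-free graph on `n` vertices. -/
noncomputable def exGen (n : ℕ) {α β : Type*} (H : SimpleGraph α) (F : SimpleGraph β) : ℕ :=
  sSup {m | ∃ G : SimpleGraph (Fin n), ¬ ContainsCopy F G ∧ m = copyCount H G}

/-- The complete bipartite graph `K_{a,b}`. -/
abbrev Kbip (a b : ℕ) : SimpleGraph (Fin a ⊕ Fin b) := completeBipartiteGraph (Fin a) (Fin b)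

/-- `K̄_{a,b}`: obtained from `K_{a,b}` by adding all edges inside the part of size `a`. -/
def KbipBar (a b : ℕ) : SimpleGraph (Fin a ⊕ Fin b) :=
  SimpleGraph.fromRel (fun u _ => u.isLeft)

/-- `k` vertex-disjoint copies of `G`. -/
def disjCopies (k : ℕ) {α : Type*} (G : SimpleGraph α) : SimpleGraph (Fin k × α) :=
  SimpleGraph.fromRel (fun u v => u.1 = v.1 ∧ G.Adj u.2 v.2)

/-- The vertex-disjoint union of `G` and `H`. -/
def disjSum {α β : Type*} (G : SimpleGraph α) (H : SimpleGraph β) : SimpleGraph (α ⊕ β) :=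
  SimpleGraph.fromRel (fun u v =>
    (∃ x y, u = Sum.inl x ∧ v = Sum.inl y ∧ G.Adj x y) ∨
    (∃ x y, u = Sum.inr x ∧ v = Sum.inr y ∧ H.Adj x y))

/-- Placing a graph `G0` on the `Fin b`-part of the vertex set `Fin a ⊕ Fin b`. -/
def liftRight (a : ℕ) {b : ℕ} (G0 : SimpleGraph (Fin b)) : SimpleGraph (Fin a ⊕ Fin b) :=
  SimpleGraph.fromRel (fun u v => ∃ x y, u = Sum.inr x ∧ v = Sum.inr y ∧ G0.Adj x y)

/-!
A copy of `K_{a,b}` (`a ≠ b`) is an `a`-set `A` together with a `b`-subset of its common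
neighbourhood `N(A)`, so a graph has `∑_{|A| = a} C(|N(A)|, b)` of them, and `K_{a,n-a}` has
`C(n - a, b)`. In a `K_{a+1,t}`-free graph every `t`-set lies in `N(A)` for at most one `a`-set
`A`; hence `∑_A C(|N(A)|, t) ≤ C(n, t)` and distinct `a`-sets share fewer than `t` common
neighbours.

Let `A₁` maximise `|N(A)|` and let `x = n - a - |N(A₁)|`. If `x = 0`, then `N(A₁)` is everything
outside `A₁`, and either `b ≥ a + t` or, by adding `t - a` vertices of `A₁ ∩ N(A)` to `A`, the
other conditions on `a, b, t` show that no other `a`-set has `b` common neighbours. If `x ≥ 1`,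
every other `A` has `|N(A)| - t ≤ min (|N(A₁)| - t, x + a - 1)`, and
`C(d, b) C(b, t) = C(d, t) C(d - t, b - t)` reduces the claim to a numerical inequality in
`n` and `x`. As a function of `x` its slack is concave for `x ≤ (n - a) / 2`, so it suffices to
check it at `x = 1`, where it comes down to `a < b`, and at `x = (n - a) / 2`, where it comes down
to `2 ^ t + 1 < 2 ^ b`; larger `x` are dominated by the midpoint.
-/

open Filter Topology Finset
open scoped Nat

theorem eventually_mul_pow_add_le_mul_pow_sub {p q : ℕ} (hpq : p < q) (c d k : ℕ) :
    ∀ᶠ N : ℕ in atTop, p * (N + c) ^ k ≤ q * (N - d) ^ k := by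
  have hden : Tendsto (fun N : ℕ => (N : ℝ) - d) atTop atTop :=
    tendsto_atTop_add_const_right _ _ tendsto_natCast_atTop_atTop
  have hratio : Tendsto (fun N : ℕ => ((N : ℝ) + c) / (N - d)) atTop (𝓝 1) := by
    have h := (tendsto_const_nhds (x := (1 : ℝ))).add
      ((tendsto_const_nhds (x := ((c + d : ℕ) : ℝ))).div_atTop hden)
    rw [add_zero] at h
    refine h.congr' ?_
    filter_upwards [hden.eventually_gt_atTop 0] with N hN
    field_simp
    push_cast
    ring
  have hlim := (hratio.pow k).const_mul (p : ℝ)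
  rw [one_pow, mul_one] at hlim
  filter_upwards [hlim.eventually (gt_mem_nhds (Nat.cast_lt.mpr hpq)),
    hden.eventually_gt_atTop 0, eventually_ge_atTop d] with N hN hpos hdN
  rw [div_pow, mul_div_assoc', div_lt_iff₀ (pow_pos hpos k)] at hN
  have : ((p * (N + c) ^ k : ℕ) : ℝ) ≤ ((q * (N - d) ^ k : ℕ) : ℝ) := by
    push_cast [Nat.cast_sub hdN]
    exact hN.le
  exact_mod_cast this

theorem Nat.succ_descFactorial_succ_eq_add (m k : ℕ) :
    (m + 1).descFactorial (k + 1) = m.descFactorial (k + 1) + (k + 1) * m.descFactorial k := by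
  rw [Nat.succ_descFactorial_succ, Nat.descFactorial_succ]
  rcases le_or_gt k m with hkm | hmk
  · rw [← Nat.add_mul]
    congr 1
    omega
  · simp [Nat.descFactorial_eq_zero_iff_lt.mpr hmk]

theorem le_of_forall_le_succ_on {β : Type*} [Preorder β] {f : ℕ → β} {p q : ℕ}
    (h : ∀ n, p ≤ n → n < q → f n ≤ f (n + 1)) (hpq : p ≤ q) : f p ≤ f q := by
  induction q, hpq using Nat.le_induction with
  | base => exact le_rfl
  | succ n hpn ih => exact (ih fun k hk hkn => h k hk (by omega)).trans (h n hpn (by omega))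

theorem min_le_of_succ_sub_antitone {h : ℕ → ℤ} {p q : ℕ}
    (hanti : ∀ i j, p ≤ i → i ≤ j → j < q → h (j + 1) - h j ≤ h (i + 1) - h i)
    {x : ℕ} (hpx : p ≤ x) (hxq : x ≤ q) : min (h p) (h q) ≤ h x := by
  by_cases hinc : ∀ k, p ≤ k → k < x → h k ≤ h (k + 1)
  · exact min_le_of_left_le (le_of_forall_le_succ_on hinc hpx)
  · push Not at hinc
    obtain ⟨k, hpk, hkx, hdec⟩ := hinc
    have hdesc : -h x ≤ -h q := le_of_forall_le_succ_on (f := fun n => -h n) (fun j hxj hjq => by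
      have := hanti k j hpk (by omega) hjq
      omega) hxq
    exact min_le_of_right_le (neg_le_neg_iff.mp hdesc)

/-- The numerical inequality behind the counting argument: `N` stands for `n - a`, `x ≥ 1` for the
number of vertices outside `A₁` missing from the largest common neighbourhood `N(A₁)` of an
`a`-set, and `m` for `|N(A)| - t` with `A ≠ A₁`. -/
def CountingInequality (a b t N : ℕ) : Prop :=
  ∀ x m, 1 ≤ x → m ≤ N - x - t → m ≤ x + a - 1 →
    (N + a).descFactorial t * m.descFactorial (b - t) + (N - x).descFactorial b ≤ N.descFactorial b

theorem eventually_descFactorial_bound_at_one {a b t : ℕ} (hab : a < b) (htb : t < b) :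
    ∀ᶠ N : ℕ in atTop,
      (N + a).descFactorial t * a.descFactorial (b - t) + (N - 1).descFactorial b ≤
        N.descFactorial b := by
  filter_upwards [eventually_mul_pow_add_le_mul_pow_sub hab a t t,
    eventually_ge_atTop (a + b)] with N hpow hN
  obtain ⟨r, hr⟩ : ∃ r, b - t = r + 1 := ⟨b - t - 1, by omega⟩
  have hsplit_a : (a - 1).descFactorial r * a = a.descFactorial (r + 1) := by
    simpa using Nat.descFactorial_mul_descFactorial (n := a) (show 1 ≤ r + 1 by omega)
  have hsplit_N : (N - 1 - t).descFactorial r * (N - 1).descFactorial t =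
      (N - 1).descFactorial (b - 1) := by
    simpa [show b - 1 - t = r by omega] using
      Nat.descFactorial_mul_descFactorial (n := N - 1) (show t ≤ b - 1 by omega)
  have hstep : N.descFactorial b = (N - 1).descFactorial b + b * (N - 1).descFactorial (b - 1) := by
    obtain ⟨b', rfl⟩ : ∃ b', b = b' + 1 := ⟨b - 1, by omega⟩
    simpa [show N - 1 + 1 = N by omega] using Nat.succ_descFactorial_succ_eq_add (N - 1) b'
  have hmain : a * (N + a).descFactorial t ≤ b * (N - 1).descFactorial t :=
    calc a * (N + a).descFactorial t ≤ a * (N + a) ^ t := by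
          gcongr; exact Nat.descFactorial_le_pow _ _
      _ ≤ b * (N - t) ^ t := hpow
      _ ≤ b * (N - 1).descFactorial t := by
        gcongr
        simpa [show N - 1 + 1 - t = N - t by omega] using Nat.pow_sub_le_descFactorial (N - 1) t
  have htail : (a - 1).descFactorial r ≤ (N - 1 - t).descFactorial r :=
    Nat.descFactorial_le _ (by omega)
  rw [hr, ← hsplit_a, hstep, ← hsplit_N, add_comm]
  refine Nat.add_le_add_left ?_ _
  calc (N + a).descFactorial t * ((a - 1).descFactorial r * a)
      = (a * (N + a).descFactorial t) * (a - 1).descFactorial r := by ring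
    _ ≤ (b * (N - 1).descFactorial t) * (N - 1 - t).descFactorial r := by gcongr
    _ = b * ((N - 1 - t).descFactorial r * (N - 1).descFactorial t) := by ring

theorem eventually_descFactorial_bound_at_half {a b t : ℕ} (ht : 0 < t) (htb : t < b) :
    ∀ᶠ N : ℕ in atTop,
      (N + a).descFactorial t * (N - N / 2 + a).descFactorial (b - t) +
        (N - N / 2).descFactorial b ≤ N.descFactorial b := by
  have hpq : 2 ^ t + 1 < 2 ^ b :=
    calc 2 ^ t + 1 < 2 ^ t + 2 ^ t := by have := Nat.one_lt_two_pow ht.ne'; omega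
      _ = 2 ^ (t + 1) := by ring
      _ ≤ 2 ^ b := Nat.pow_le_pow_right (by norm_num) htb
  filter_upwards [eventually_mul_pow_add_le_mul_pow_sub hpq (2 * a + 1) (b - 1) b] with N hpow
  set M := N - N / 2
  have hM : 2 * M ≤ N + 1 := by omega
  have hb : b = t + (b - t) := by omega
  refine Nat.le_of_mul_le_mul_left ?_ (Nat.two_pow_pos b)
  calc 2 ^ b * ((N + a).descFactorial t * (M + a).descFactorial (b - t) + M.descFactorial b)
      ≤ 2 ^ b * ((N + a) ^ t * (M + a) ^ (b - t) + M ^ b) := by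
        gcongr <;> exact Nat.descFactorial_le_pow _ _
    _ = 2 ^ t * (N + a) ^ t * (2 * M + 2 * a) ^ (b - t) + (2 * M) ^ b := by
        have h2b : 2 ^ b = 2 ^ t * 2 ^ (b - t) := by rw [← pow_add, ← hb]
        rw [show 2 * M + 2 * a = 2 * (M + a) by ring, mul_pow, mul_pow, h2b]
        ring
    _ ≤ 2 ^ t * (N + (2 * a + 1)) ^ t * (N + (2 * a + 1)) ^ (b - t) + (N + (2 * a + 1)) ^ b := by
        gcongr 2 ^ t * ?_ ^ t * ?_ ^ (b - t) + ?_ ^ b <;> omega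
    _ = (2 ^ t + 1) * (N + (2 * a + 1)) ^ b := by
        rw [mul_assoc, ← pow_add, ← hb]; ring
    _ ≤ 2 ^ b * (N - (b - 1)) ^ b := hpow
    _ ≤ 2 ^ b * N.descFactorial b := by
        gcongr
        simpa [show N + 1 - b = N - (b - 1) by omega] using Nat.pow_sub_le_descFactorial N b

theorem descFactorial_bound_of_le_half {N a b t : ℕ} (htb : t < b)
    (hone : (N + a).descFactorial t * a.descFactorial (b - t) + (N - 1).descFactorial b ≤
        N.descFactorial b)
    (hhalf : (N + a).descFactorial t * (N - N / 2 + a).descFactorial (b - t) +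
        (N - N / 2).descFactorial b ≤ N.descFactorial b)
    {x : ℕ} (hx : 1 ≤ x) (hxN : 2 * x ≤ N) :
    (N + a).descFactorial t * (x + a - 1).descFactorial (b - t) + (N - x).descFactorial b ≤
      N.descFactorial b := by
  obtain ⟨r, hr⟩ : ∃ r, b - t = r + 1 := ⟨b - t - 1, by omega⟩
  obtain ⟨b', rfl⟩ : ∃ b', b = b' + 1 := ⟨b - 1, by omega⟩
  set C := (N + a).descFactorial t
  let h : ℕ → ℤ := fun x =>
    N.descFactorial (b' + 1) - (N - x).descFactorial (b' + 1) -
      C * (x + a - 1).descFactorial (r + 1)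
  have hstep : ∀ j, 1 ≤ j → j < N → h (j + 1) - h j =
      (b' + 1) * (N - (j + 1)).descFactorial b' - C * ((r + 1) * (j + a - 1).descFactorial r) := by
    intro j hj hjN
    have e1 := Nat.succ_descFactorial_succ_eq_add (N - (j + 1)) b'
    have e2 := Nat.succ_descFactorial_succ_eq_add (j + a - 1) r
    rw [show N - (j + 1) + 1 = N - j by omega] at e1
    rw [show j + a - 1 + 1 = j + 1 + a - 1 by omega] at e2
    simp only [h, e1, e2]
    push_cast
    ring
  have hanti : ∀ i j, 1 ≤ i → i ≤ j → j < N / 2 → h (j + 1) - h j ≤ h (i + 1) - h i := by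
    intro i j hi hij hj
    rw [hstep i hi (by omega), hstep j (by omega) (by omega)]
    have hX : (N - (j + 1)).descFactorial b' ≤ (N - (i + 1)).descFactorial b' :=
      Nat.descFactorial_le _ (by omega)
    have hY : (i + a - 1).descFactorial r ≤ (j + a - 1).descFactorial r :=
      Nat.descFactorial_le _ (by omega)
    gcongr
  rw [hr] at hone hhalf
  have h1 : 0 ≤ h 1 := by
    simp only [h, Nat.add_sub_cancel_left]
    linarith
  have hhalf' : 0 ≤ h (N / 2) := by
    have : C * (N / 2 + a - 1).descFactorial (r + 1) ≤ C * (N - N / 2 + a).descFactorial (r + 1) :=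
      Nat.mul_le_mul_left _ (Nat.descFactorial_le _ (by omega))
    simp only [h]
    linarith
  have := (le_min h1 hhalf').trans <|
    min_le_of_succ_sub_antitone hanti hx (Nat.le_div_iff_mul_le two_pos |>.mpr (by omega))
  simp only [h] at this
  rw [hr]
  linarith

theorem eventually_countingInequality {a b t : ℕ} (hab : a < b) (ht : 0 < t) (htb : t < b) :
    ∀ᶠ N : ℕ in atTop, CountingInequality a b t N := by
  filter_upwards [eventually_descFactorial_bound_at_one hab htb,
    eventually_descFactorial_bound_at_half (a := a) ht htb] with N hone hhalf x m hx hm₁ hm₂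
  rcases le_or_gt (2 * x) N with hxN | hxN
  · calc _ ≤ (N + a).descFactorial t * (x + a - 1).descFactorial (b - t) +
          (N - x).descFactorial b := by gcongr
      _ ≤ _ := descFactorial_bound_of_le_half htb hone hhalf hx hxN
  · calc _ ≤ (N + a).descFactorial t * (N - N / 2 + a).descFactorial (b - t) +
          (N - N / 2).descFactorial b := by gcongr <;> omega
      _ ≤ _ := hhalf

theorem containsCopy_iff_isContained {α β : Type*} {F : SimpleGraph α} {G : SimpleGraph β} :
    ContainsCopy F G ↔ F ⊑ G :=
  ⟨fun ⟨f, hf⟩ => ⟨⟨f, hf⟩⟩, fun ⟨f⟩ => ⟨f.toHom, f.injective⟩⟩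

namespace SimpleGraph

theorem Subgraph.map_map_symm {V W : Type*} {G : SimpleGraph V} {G' : SimpleGraph W}
    (e : G ≃g G') (S : G.Subgraph) :
    (S.map e.toCopy.toHom).map e.symm.toCopy.toHom = S := by
  rw [← Subgraph.map_comp]
  convert Subgraph.map_id S
  ext; simp

theorem copyCount_congr_right {α V W : Type*} {H : SimpleGraph α} {G : SimpleGraph V}
    {G' : SimpleGraph W} (e : G ≃g G') : _root_.copyCount H G = _root_.copyCount H G' :=
  Nat.card_congr
    { toFun S := ⟨S.1.map e.toCopy.toHom, S.2.map (·.trans (e.toCopy.isoSubgraphMap S.1))⟩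
      invFun S :=
        ⟨S.1.map e.symm.toCopy.toHom, S.2.map (·.trans (e.symm.toCopy.isoSubgraphMap S.1))⟩
      left_inv S := Subtype.ext (Subgraph.map_map_symm e S.1)
      right_inv S := Subtype.ext (Subgraph.map_map_symm e.symm S.1) }

section BicliqueSubgraph

variable {V : Type*} {G : SimpleGraph V}

variable (G) in
def bicliqueSubgraph (A B : Finset V) : G.Subgraph where
  verts := ↑A ∪ ↑B
  Adj u v := G.Adj u v ∧ (u ∈ A ∧ v ∈ B ∨ u ∈ B ∧ v ∈ A)
  adj_sub h := h.1
  edge_vert h := by rcases h.2 with ⟨h, -⟩ | ⟨h, -⟩ <;> simp [h]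
  symm := ⟨fun _ _ h => ⟨h.1.symm, by tauto⟩⟩

theorem bicliqueSubgraph_comm (A B : Finset V) :
    G.bicliqueSubgraph A B = G.bicliqueSubgraph B A := by
  ext <;> simp [bicliqueSubgraph] <;> tauto

theorem toSubgraph_eq_bicliqueSubgraph [DecidableEq V] {α β : Type*} [Fintype α] [Fintype β]
    (f : Copy (completeBipartiteGraph α β) G) :
    f.toSubgraph = G.bicliqueSubgraph (univ.image (f ∘ Sum.inl)) (univ.image (f ∘ Sum.inr)) := by
  ext u v
  · simp [bicliqueSubgraph]
  · simp only [bicliqueSubgraph, Subgraph.map_adj, mem_image, mem_univ, true_and,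
      Function.comp_apply]
    constructor
    · rintro ⟨x, y, hxy, rfl, rfl⟩
      refine ⟨f.toHom.map_adj hxy, ?_⟩
      rcases x with i | i <;> rcases y with j | j <;> simp_all
    · rintro ⟨-, ⟨⟨i, rfl⟩, ⟨j, rfl⟩⟩ | ⟨⟨i, rfl⟩, ⟨j, rfl⟩⟩⟩
      · exact ⟨.inl i, .inr j, by simp, rfl, rfl⟩
      · exact ⟨.inr i, .inl j, by simp, rfl, rfl⟩

theorem bicliqueSubgraph_adj_iff_of_mem_left {A B : Finset V} {u v : V}
    (h : G.IsCompleteBetween A B) (hu : u ∈ A) :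
    (G.bicliqueSubgraph A B).Adj u v ↔ v ∈ B :=
  ⟨fun ⟨_, h'⟩ => h'.elim And.right fun ⟨huB, _⟩ => absurd (h hu huB) G.irrefl,
    fun hv => ⟨h hu hv, .inl ⟨hu, hv⟩⟩⟩

theorem bicliqueSubgraph_adj_iff_of_mem_right {A B : Finset V} {u v : V}
    (h : G.IsCompleteBetween A B) (hu : u ∈ B) :
    (G.bicliqueSubgraph A B).Adj u v ↔ v ∈ A := by
  rw [bicliqueSubgraph_comm]
  exact bicliqueSubgraph_adj_iff_of_mem_left h.symm hu

theorem subset_of_bicliqueSubgraph_eq {A B A' B' : Finset V} (hAB : G.IsCompleteBetween A B)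
    (hAB' : G.IsCompleteBetween A' B') (hcard : #A' ≠ #B)
    (heq : G.bicliqueSubgraph A B = G.bicliqueSubgraph A' B') : A ⊆ A' := by
  intro u hu
  have hu' : u ∈ (G.bicliqueSubgraph A' B').verts := heq ▸ Or.inl hu
  rcases hu' with hu' | hu'
  · exact hu'
  · -- in the common subgraph, the neighbourhood of `u` is both `B` and `A'`
    refine absurd (congrArg card (Finset.ext fun v => ?_)) hcard
    rw [← bicliqueSubgraph_adj_iff_of_mem_right hAB' hu', ← heq,
      bicliqueSubgraph_adj_iff_of_mem_left hAB hu]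

theorem exists_copy_toSubgraph_eq {α β : Type*} [Fintype α] [Fintype β] {A B : Finset V}
    (hA : #A = Fintype.card α) (hB : #B = Fintype.card β) (h : G.IsCompleteBetween A B) :
    ∃ f : Copy (completeBipartiteGraph α β) G, f.toSubgraph = G.bicliqueSubgraph A B := by
  classical
  let f := Copy.completeBipartiteGraph A B hA hB h
  refine ⟨f, ?_⟩
  rw [toSubgraph_eq_bicliqueSubgraph]
  congr <;> refine eq_of_subset_of_card_le ?_ ?_ <;>
    simp [subset_iff, f, Copy.completeBipartiteGraph, hA, hB,
      card_image_of_injective _ (Subtype.val_injective.comp (Function.Embedding.injective _))]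

end BicliqueSubgraph

section CommonNbhd

variable {V : Type*} [Fintype V] {G : SimpleGraph V} [DecidableRel G.Adj]

variable (G) in
def commonNbhd (S : Finset V) : Finset V := {v | ∀ u ∈ S, G.Adj u v}

@[simp] theorem mem_commonNbhd {S : Finset V} {v : V} :
    v ∈ G.commonNbhd S ↔ ∀ u ∈ S, G.Adj u v := by
  simp [commonNbhd]

theorem subset_commonNbhd_iff {A B : Finset V} :
    B ⊆ G.commonNbhd A ↔ G.IsCompleteBetween A B :=
  ⟨fun h ⦃_⦄ hu ⦃_⦄ hv => mem_commonNbhd.1 (h hv) _ hu,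
    fun h _ hv => mem_commonNbhd.2 fun _ hu => h hu hv⟩

theorem disjoint_commonNbhd (S : Finset V) : Disjoint S (G.commonNbhd S) :=
  Finset.disjoint_left.2 fun v hv hv' => G.irrefl (mem_commonNbhd.1 hv' v hv)

theorem card_commonNbhd_le [DecidableEq V] (S : Finset V) :
    #(G.commonNbhd S) ≤ Fintype.card V - #S := by
  rw [← card_compl]
  exact card_le_card fun v hv => mem_compl.2 fun hvS =>
    Finset.disjoint_left.1 (disjoint_commonNbhd S) hvS hv

theorem completeBipartiteGraph_fin_isContained_iff {s u : ℕ} :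
    completeBipartiteGraph (Fin s) (Fin u) ⊑ G ↔
      ∃ T : Finset V, #T = u ∧ s ≤ #(G.commonNbhd T) := by
  rw [completeBipartiteGraph_isContained_iff]
  simp only [Fintype.card_fin]
  constructor
  · rintro ⟨L, R, hL, hR, h⟩
    refine ⟨R, hR, hL ▸ card_le_card ?_⟩
    exact subset_commonNbhd_iff.2 h.symm
  · rintro ⟨T, hT, hs⟩
    obtain ⟨L, hLT, hL⟩ := exists_subset_card_eq hs
    exact ⟨L, T, hL, hT, (subset_commonNbhd_iff.1 hLT).symm⟩

theorem not_containsCopy_iff {a t : ℕ} :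
    ¬ ContainsCopy (Kbip (a + 1) t) G ↔ ∀ T : Finset V, #T = t → #(G.commonNbhd T) ≤ a := by
  simp [containsCopy_iff_isContained, completeBipartiteGraph_fin_isContained_iff]

variable (G) in
def bicliques (a b : ℕ) : Finset (Σ _ : Finset V, Finset V) :=
  (univ.powersetCard a).sigma fun A => (G.commonNbhd A).powersetCard b

theorem mem_bicliques {a b : ℕ} {A B : Finset V} :
    ⟨A, B⟩ ∈ G.bicliques a b ↔ #A = a ∧ #B = b ∧ G.IsCompleteBetween A B := by
  simp [bicliques, subset_commonNbhd_iff, and_comm]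

theorem card_bicliques (a b : ℕ) :
    #(G.bicliques a b) = ∑ A ∈ univ.powersetCard a, (#(G.commonNbhd A)).choose b := by
  simp [bicliques]

theorem eq_of_bicliqueSubgraph_eq {a b : ℕ} (hab : a ≠ b) {A B A' B' : Finset V}
    (hp : ⟨A, B⟩ ∈ G.bicliques a b) (hq : ⟨A', B'⟩ ∈ G.bicliques a b)
    (heq : G.bicliqueSubgraph A B = G.bicliqueSubgraph A' B') : A = A' ∧ B = B' := by
  obtain ⟨hA, hB, h⟩ := mem_bicliques.1 hp
  obtain ⟨hA', hB', h'⟩ := mem_bicliques.1 hq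
  refine ⟨eq_of_subset_of_card_le (subset_of_bicliqueSubgraph_eq h h' (by omega) heq) (by omega),
    eq_of_subset_of_card_le (subset_of_bicliqueSubgraph_eq h.symm h'.symm (by omega) ?_) (by omega)⟩
  rwa [bicliqueSubgraph_comm, bicliqueSubgraph_comm B']

theorem copyCount_eq_card_bicliques [DecidableEq V] {a b : ℕ} (hab : a ≠ b) :
    _root_.copyCount (Kbip a b) G = #(G.bicliques a b) := by
  let Φ : G.bicliques a b → {S : G.Subgraph // Nonempty (Kbip a b ≃g S.coe)} := fun p =>
    ⟨G.bicliqueSubgraph p.1.1 p.1.2, by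
      obtain ⟨hA, hB, h⟩ := mem_bicliques.1 p.2
      obtain ⟨f, hf⟩ := exists_copy_toSubgraph_eq (α := Fin a) (β := Fin b)
        (hA.trans (Fintype.card_fin a).symm) (hB.trans (Fintype.card_fin b).symm) h
      exact ⟨hf ▸ f.isoToSubgraph⟩⟩
  have hΦ : Function.Bijective Φ := by
    constructor
    · rintro ⟨⟨A, B⟩, hp⟩ ⟨⟨A', B'⟩, hq⟩ heq
      obtain ⟨rfl, rfl⟩ := eq_of_bicliqueSubgraph_eq hab hp hq (congrArg Subtype.val heq)
      rfl
    · rintro ⟨S, hS⟩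
      obtain ⟨f, rfl⟩ : S ∈ Set.range Copy.toSubgraph := by rwa [Copy.range_toSubgraph]
      have hp : ⟨univ.image (f ∘ Sum.inl), univ.image (f ∘ Sum.inr)⟩ ∈ G.bicliques a b := by
        refine mem_bicliques.2 ⟨?_, ?_, ?_⟩
        · simp [card_image_of_injective (f := f ∘ Sum.inl) _ (f.injective.comp Sum.inl_injective)]
        · simp [card_image_of_injective (f := f ∘ Sum.inr) _ (f.injective.comp Sum.inr_injective)]
        · simp only [coe_image, coe_univ, Set.image_univ]
          rintro _ ⟨i, rfl⟩ _ ⟨j, rfl⟩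
          exact f.toHom.map_adj (by simp)
      exact ⟨⟨_, hp⟩, Subtype.ext (toSubgraph_eq_bicliqueSubgraph f).symm⟩
  rw [_root_.copyCount, ← Nat.card_congr (Equiv.ofBijective Φ hΦ), Nat.card_eq_finsetCard]

end CommonNbhd

section CompleteBipartite

variable {α β : Type*} [Fintype α] [Fintype β]

instance : DecidableRel (completeBipartiteGraph α β).Adj := fun u v =>
  inferInstanceAs (Decidable (u.isLeft ∧ v.isRight ∨ u.isRight ∧ v.isLeft))

theorem card_commonNbhd_completeBipartiteGraph_le_of_inr_mem {S : Finset (α ⊕ β)} {j : β}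
    (hj : .inr j ∈ S) : #((completeBipartiteGraph α β).commonNbhd S) ≤ Fintype.card α := by
  calc #((completeBipartiteGraph α β).commonNbhd S) ≤ #(univ.map Function.Embedding.inl) := by
        refine card_le_card fun v hv => ?_
        rcases v with i | i
        · simp
        · simpa using mem_commonNbhd.1 hv _ hj
    _ = Fintype.card α := by simp

theorem card_commonNbhd_completeBipartiteGraph_le {T : Finset (α ⊕ β)}
    (hT : Fintype.card α < #T) :
    #((completeBipartiteGraph α β).commonNbhd T) ≤ Fintype.card α := by
  classical
  obtain ⟨u, hu, hu'⟩ := exists_mem_notMem_of_card_lt_card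
    (s := (univ : Finset α).map .inl) (t := T) (by simpa using hT)
  rcases u with i | j
  · simp at hu'
  · exact card_commonNbhd_completeBipartiteGraph_le_of_inr_mem hu

theorem card_bicliques_completeBipartiteGraph {b : ℕ}
    (hα : 0 < Fintype.card α) (hb : Fintype.card α < b) :
    #((completeBipartiteGraph α β).bicliques (Fintype.card α) b) = (Fintype.card β).choose b := by
  classical
  have hL : (univ : Finset α).map .inl ∈ (univ : Finset (α ⊕ β)).powersetCard (Fintype.card α) := by
    simp
  rw [card_bicliques, sum_eq_single_of_mem _ hL]
  · have hN : (completeBipartiteGraph α β).commonNbhd ((univ : Finset α).map .inl) =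
        (univ : Finset β).map .inr := by
      ext (i | j)
      · simpa using Fintype.card_pos_iff.1 hα
      · simp
    rw [hN, card_map, card_univ]
  · intro A hA hAL
    rw [mem_powersetCard] at hA hL
    obtain ⟨u, huA, huL⟩ := not_subset.1 fun h => hAL (eq_of_subset_of_card_le h (by omega))
    rcases u with i | j
    · simp at huL
    · exact Nat.choose_eq_zero_of_lt
        ((card_commonNbhd_completeBipartiteGraph_le_of_inr_mem huA).trans_lt hb)

end CompleteBipartite

section Extremal

variable {V : Type*} [Fintype V] {G : SimpleGraph V} [DecidableRel G.Adj] {a b t : ℕ}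

theorem commonNbhd_eq_of_subset_commonNbhd
    (hfree : ∀ T : Finset V, #T = t → #(G.commonNbhd T) ≤ a) {A T : Finset V} (hA : #A = a)
    (hT : T ⊆ G.commonNbhd A) (hTt : #T = t) : G.commonNbhd T = A := by
  refine (eq_of_subset_of_card_le (fun u hu => ?_) (hA ▸ hfree T hTt)).symm
  exact mem_commonNbhd.2 fun w hw => (mem_commonNbhd.1 (hT hw) u hu).symm

theorem card_inter_commonNbhd_lt [DecidableEq V]
    (hfree : ∀ T : Finset V, #T = t → #(G.commonNbhd T) ≤ a) {A A' : Finset V} (hA : #A = a)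
    (hA' : #A' = a) (hne : A ≠ A') : #(G.commonNbhd A ∩ G.commonNbhd A') < t := by
  by_contra! h
  obtain ⟨T, hT, hTt⟩ := exists_subset_card_eq h
  exact hne <|
    (commonNbhd_eq_of_subset_commonNbhd hfree hA (hT.trans inter_subset_left) hTt).symm.trans
      (commonNbhd_eq_of_subset_commonNbhd hfree hA' (hT.trans inter_subset_right) hTt)

theorem sum_choose_card_commonNbhd_le
    (hfree : ∀ T : Finset V, #T = t → #(G.commonNbhd T) ≤ a) :
    ∑ A ∈ univ.powersetCard a, (#(G.commonNbhd A)).choose t ≤ (Fintype.card V).choose t := by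
  calc ∑ A ∈ univ.powersetCard a, (#(G.commonNbhd A)).choose t
      = #((univ.powersetCard a).sigma fun A => (G.commonNbhd A).powersetCard t) := by
        simp [card_sigma]
    _ ≤ #((univ : Finset V).powersetCard t) := by
        refine card_le_card_of_injOn (fun p => p.2) (fun p hp => ?_) fun p hp q hq hpq => ?_
        · simp only [coe_sigma, Set.mem_sigma_iff, mem_coe, mem_powersetCard] at hp
          simp [hp.2.2]
        · simp only [coe_sigma, Set.mem_sigma_iff, mem_coe, mem_powersetCard] at hp hq
          have h1 := commonNbhd_eq_of_subset_commonNbhd hfree hp.1.2 hp.2.1 hp.2.2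
          have h2 := commonNbhd_eq_of_subset_commonNbhd hfree hq.1.2 hq.2.1 hq.2.2
          rw [show p.2 = q.2 from hpq] at h1
          exact Sigma.ext (h1.symm.trans h2) (heq_of_eq hpq)
    _ = (Fintype.card V).choose t := by simp

theorem card_commonNbhd_le_of_ne [DecidableEq V]
    (hfree : ∀ T : Finset V, #T = t → #(G.commonNbhd T) ≤ a) {A A₁ : Finset V} (hA : #A = a)
    (hA₁ : #A₁ = a) (hne : A ≠ A₁) :
    #(G.commonNbhd A) ≤ t - 1 + (Fintype.card V - #(G.commonNbhd A₁)) := by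
  have h1 := card_inter_commonNbhd_lt hfree hA hA₁ hne
  have h2 : #(G.commonNbhd A \ G.commonNbhd A₁) ≤ Fintype.card V - #(G.commonNbhd A₁) := by
    rw [← card_compl]
    exact card_le_card fun v hv => mem_compl.2 (mem_sdiff.1 hv).2
  have := card_inter_add_card_sdiff (G.commonNbhd A) (G.commonNbhd A₁)
  omega

theorem card_commonNbhd_sdiff_le [DecidableEq V]
    (hfree : ∀ T : Finset V, #T = t → #(G.commonNbhd T) ≤ a) (hat : a ≤ t) {A A₁ P : Finset V}
    (hA : #A = a) (hfull : G.commonNbhd A₁ = A₁ᶜ) (hP : P ⊆ G.commonNbhd A ∩ A₁)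
    (hPt : #P = t - a) : #(G.commonNbhd A \ A₁) ≤ a := by
  have hdisj : Disjoint A P :=
    (disjoint_commonNbhd A).mono_right (hP.trans inter_subset_left)
  refine le_trans (card_le_card fun v hv => ?_) (hfree (A ∪ P) ?_)
  · obtain ⟨hvA, hvA₁⟩ := mem_sdiff.1 hv
    have hvN : v ∈ G.commonNbhd A₁ := hfull ▸ mem_compl.2 hvA₁
    refine mem_commonNbhd.2 fun u hu => ?_
    rcases mem_union.1 hu with hu | hu
    · exact mem_commonNbhd.1 hvA u hu
    · exact mem_commonNbhd.1 hvN u (mem_inter.1 (hP hu)).2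
  · rw [card_union_of_disjoint hdisj, hA, hPt]
    omega

theorem card_commonNbhd_lt_of_commonNbhd_eq_compl [DecidableEq V]
    (hfree : ∀ T : Finset V, #T = t → #(G.commonNbhd T) ≤ a) (hat : a ≤ t)
    (hcase : a + t ≤ b ∨ (2 * a < b ∧ 2 * t ≤ a + b + 1)) {A A₁ : Finset V}
    (hA : #A = a) (hA₁ : #A₁ = a) (hfull : G.commonNbhd A₁ = A₁ᶜ) (hne : A ≠ A₁) :
    #(G.commonNbhd A) < b := by
  by_contra! hb
  have hout : #(G.commonNbhd A \ A₁) < t := by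
    refine (card_le_card fun v hv => ?_).trans_lt (card_inter_commonNbhd_lt hfree hA hA₁ hne)
    obtain ⟨hvA, hvA₁⟩ := mem_sdiff.1 hv
    exact mem_inter.2 ⟨hvA, hfull ▸ mem_compl.2 hvA₁⟩
  have hin : #(G.commonNbhd A ∩ A₁) ≤ a := hA₁ ▸ card_le_card inter_subset_right
  have hsplit := card_inter_add_card_sdiff (G.commonNbhd A) A₁
  rcases hcase with hcase | ⟨hba, hbt⟩
  · omega
  · obtain ⟨P, hP, hPt⟩ := exists_subset_card_eq (show t - a ≤ #(G.commonNbhd A ∩ A₁) by omega)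
    have := card_commonNbhd_sdiff_le hfree hat hA hfull hP hPt
    omega

theorem factorial_mul_sum_choose_le (hfree : ∀ T : Finset V, #T = t → #(G.commonNbhd T) ≤ a)
    (htb : t ≤ b) {𝒜 : Finset (Finset V)} (h𝒜 : 𝒜 ⊆ univ.powersetCard a) {m : ℕ}
    (hm : ∀ A ∈ 𝒜, #(G.commonNbhd A) - t ≤ m) :
    b ! * ∑ A ∈ 𝒜, (#(G.commonNbhd A)).choose b ≤
      (Fintype.card V).descFactorial t * m.descFactorial (b - t) := by
  calc b ! * ∑ A ∈ 𝒜, (#(G.commonNbhd A)).choose b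
      = ∑ A ∈ 𝒜, (#(G.commonNbhd A) - t).descFactorial (b - t) *
          (#(G.commonNbhd A)).descFactorial t := by
        simp_rw [mul_sum, ← Nat.descFactorial_eq_factorial_mul_choose,
          Nat.descFactorial_mul_descFactorial htb]
    _ ≤ ∑ A ∈ 𝒜, m.descFactorial (b - t) * (t ! * (#(G.commonNbhd A)).choose t) := by
        gcongr with A hA
        · exact hm A hA
        · rw [Nat.descFactorial_eq_factorial_mul_choose]
    _ = m.descFactorial (b - t) * t ! * ∑ A ∈ 𝒜, (#(G.commonNbhd A)).choose t := by
        rw [mul_sum]; simp_rw [mul_assoc]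
    _ ≤ m.descFactorial (b - t) * t ! * (Fintype.card V).choose t := by
        gcongr
        exact (sum_le_sum_of_subset h𝒜).trans (sum_choose_card_commonNbhd_le hfree)
    _ = (Fintype.card V).descFactorial t * m.descFactorial (b - t) := by
        rw [Nat.descFactorial_eq_factorial_mul_choose (Fintype.card V)]; ring

theorem sum_choose_card_commonNbhd_le_choose [DecidableEq V]
    (hfree : ∀ T : Finset V, #T = t → #(G.commonNbhd T) ≤ a) (hat : a < t) (htb : t ≤ b)
    (hcase : a + t ≤ b ∨ (2 * a < b ∧ 2 * t ≤ a + b + 1)) (ha : a ≤ Fintype.card V)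
    (hineq : CountingInequality a b t (Fintype.card V - a)) :
    ∑ A ∈ univ.powersetCard a, (#(G.commonNbhd A)).choose b ≤ (Fintype.card V - a).choose b := by
  set N := Fintype.card V - a
  obtain ⟨A₁, hA₁, hmax⟩ := exists_max_image (univ.powersetCard a) (fun A => #(G.commonNbhd A))
    (powersetCard_nonempty.2 (by simpa using ha))
  have hA₁a : #A₁ = a := (mem_powersetCard.1 hA₁).2
  have hy : #(G.commonNbhd A₁) ≤ N := by simpa [hA₁a] using card_commonNbhd_le (G := G) A₁
  rw [← add_sum_erase _ _ hA₁]
  rcases hy.eq_or_lt with hyN | hyN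
  · have hfull : G.commonNbhd A₁ = A₁ᶜ := eq_of_subset_of_card_le
      (fun v hv => mem_compl.2 fun h => Finset.disjoint_left.1 (disjoint_commonNbhd A₁) h hv)
      (by rw [card_compl]; omega)
    rw [sum_eq_zero fun A hA => ?_, add_zero, hyN]
    obtain ⟨hne, hA⟩ := mem_erase.1 hA
    exact Nat.choose_eq_zero_of_lt (card_commonNbhd_lt_of_commonNbhd_eq_compl hfree hat.le hcase
      (mem_powersetCard.1 hA).2 hA₁a hfull hne)
  · set x := N - #(G.commonNbhd A₁)
    have hm : ∀ A ∈ (univ.powersetCard a).erase A₁,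
        #(G.commonNbhd A) - t ≤ min (N - x - t) (x + a - 1) := by
      intro A hA
      obtain ⟨hne, hA⟩ := mem_erase.1 hA
      have h1 := hmax A hA
      have h2 := card_commonNbhd_le_of_ne hfree (mem_powersetCard.1 hA).2 hA₁a hne
      omega
    have hsum := factorial_mul_sum_choose_le hfree htb (erase_subset _ _) hm
    have hnum := hineq x _ (by omega) (min_le_left _ _) (min_le_right _ _)
    rw [show N + a = Fintype.card V by omega] at hnum
    refine Nat.le_of_mul_le_mul_left ?_ (Nat.factorial_pos b)
    rw [mul_add, ← Nat.descFactorial_eq_factorial_mul_choose,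
      ← Nat.descFactorial_eq_factorial_mul_choose, show #(G.commonNbhd A₁) = N - x by omega]
    omega

end Extremal

end SimpleGraph

/-- if `2 ≤ a < t < b` and either `b ≥ a + t`, or (`b < a + t`, `b > 2a`,
`t ≤ 2a` and `a + b ≥ 2t - 1`), then for large `n`,
`ex(n, K_{a,b}, K_{a+1,t}) = N(K_{a,b}, K_{a,n-a})`. -/
theorem stmt3 (a b t : ℕ) (ha : 2 ≤ a) (hat : a < t) (htb : t < b)
    (hcase : a + t ≤ b ∨ (b < a + t ∧ 2 * a < b ∧ t ≤ 2 * a ∧ 2 * t - 1 ≤ a + b)) :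
    ∃ n₀ : ℕ, ∀ n ≥ n₀,
      exGen n (Kbip a b) (Kbip (a + 1) t) = _root_.copyCount (Kbip a b) (Kbip a (n - a)) := by
  obtain ⟨N₀, hN₀⟩ := eventually_atTop.1 <|
    eventually_countingInequality (a := a) (hat.trans htb) (by omega) htb
  refine ⟨N₀ + a + b, fun n hn => ?_⟩
  have hcount : _root_.copyCount (Kbip a b) (Kbip a (n - a)) = (n - a).choose b := by
    rw [copyCount_eq_card_bicliques (by omega)]
    simpa using card_bicliques_completeBipartiteGraph (α := Fin a) (β := Fin (n - a))
      (by simp; omega) (by simp; omega)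
  let e : Fin n ≃ Fin a ⊕ Fin (n - a) := (finCongr (by omega)).trans finSumFinEquiv.symm
  refine IsGreatest.csSup_eq ⟨⟨(Kbip a (n - a)).comap e, ?_, ?_⟩, ?_⟩
  · rw [containsCopy_iff_isContained, isContained_congr_right (Iso.comap e _),
      ← containsCopy_iff_isContained, not_containsCopy_iff]
    intro T hT
    simpa using card_commonNbhd_completeBipartiteGraph_le (α := Fin a) (β := Fin (n - a))
      (T := T) (by simp; omega)
  · exact copyCount_congr_right (Iso.comap e _).symm
  · rintro _ ⟨G, hG, rfl⟩
    classical
    rw [copyCount_eq_card_bicliques (by omega), card_bicliques, hcount]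
    simpa using sum_choose_card_commonNbhd_le_choose (not_containsCopy_iff.1 hG) hat htb.le
      (by omega) (by simp; omega) (by simpa using hN₀ (n - a) (by omega))
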